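/- arXiv:1103.2038 — 2 statements merged into one kernel-verified Lean document; each statement's English description precedes it below -/
import Mathlib

section
/- Let H = H⁺ ⊕ H⁻ be an orthogonal decomposition of a Hilbert space, and let W ⊆ W' be closed subspaces of H such that the orthogonal projections pr₊ : W → H⁺ and pr₊ : W' → H⁺ are Fredholm, and dim(W'/W) = l is finite. Then ν(W') = ν(W) + l, where ν(V) = dim(ker(pr₊|_V)) − dim(coker(pr₊|_V)) is the virtual dimension. -/
open Module Submodule

noncomputable section

variable {H : Type*} [NormedAddCommGroup H] [InnerProductSpace ℂ H] [CompleteSpace H]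

def IsFredholm {E F : Type*} [NormedAddCommGroup E] [InnerProductSpace ℂ E]
    [NormedAddCommGroup F] [InnerProductSpace ℂ F] (T : E →L[ℂ] F) : Prop :=
  FiniteDimensional ℂ (LinearMap.ker (T : E →ₗ[ℂ] F)) ∧
  FiniteDimensional ℂ (F ⧸ LinearMap.range (T : E →ₗ[ℂ] F)) ∧
  IsClosed (LinearMap.range (T : E →ₗ[ℂ] F) : Set F)

/-- The orthogonal projection `pr₊ : W → H⁺` restricted to a subspace `W`. -/
def projPlus (Hp : Submodule ℂ H) [HasOrthogonalProjection Hp] (W : Submodule ℂ H) :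
    W →L[ℂ] Hp :=
  (orthogonalProjection Hp).comp W.subtypeL

/-- The virtual dimension `ν(W) = dim ker(pr₊|_W) − dim coker(pr₊|_W)`. -/
def vdim (Hp : Submodule ℂ H) [HasOrthogonalProjection Hp] (W : Submodule ℂ H) : ℤ :=
  (finrank ℂ (LinearMap.ker (projPlus Hp W : W →ₗ[ℂ] Hp)) : ℤ) -
    (finrank ℂ (Hp ⧸ LinearMap.range (projPlus Hp W : W →ₗ[ℂ] Hp)) : ℤ)

namespace Submodule

variable {k M : Type*} [DivisionRing k] [AddCommGroup M] [Module k M] {p q : Submodule k M}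

theorem index_inclusion (h : p ≤ q) :
    (inclusion h).index = -finrank k (q ⧸ p.comap q.subtype) := by
  rw [LinearMap.index_of_injective (inclusion_injective h), range_inclusion]

theorem index_comp_inclusion {N : Type*} [AddCommGroup N] [Module k N] (f : q →ₗ[k] N)
    (h : p ≤ q) [FiniteDimensional k f.ker] [FiniteDimensional k (N ⧸ f.range)]
    [FiniteDimensional k (q ⧸ p.comap q.subtype)] :
    (f ∘ₗ inclusion h).index = f.index - finrank k (q ⧸ p.comap q.subtype) := by
  have : FiniteDimensional k (q ⧸ (inclusion h).range) := by rwa [range_inclusion]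
  have : FiniteDimensional k (inclusion h).ker := by
    rw [LinearMap.ker_eq_bot.mpr (inclusion_injective h)]
    infer_instance
  rw [LinearMap.index_comp, index_inclusion, sub_eq_add_neg]

end Submodule

theorem vdim_of_le_general (Hp : Submodule ℂ H) [HasOrthogonalProjection Hp]
    (W W' : Submodule ℂ H)
    (hle : W ≤ W')
    (hFW' : IsFredholm (projPlus Hp W'))
    (l : ℕ) (hfin : FiniteDimensional ℂ (↥W' ⧸ W.comap W'.subtype))
    (hl : finrank ℂ (↥W' ⧸ W.comap W'.subtype) = l) :
    vdim Hp W' = vdim Hp W + l := by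
  obtain ⟨hker, hcoker, -⟩ := hFW'
  change (projPlus Hp W' : W' →ₗ[ℂ] Hp).index =
    ((projPlus Hp W' : W' →ₗ[ℂ] Hp) ∘ₗ inclusion hle).index + l
  rw [Submodule.index_comp_inclusion, hl, sub_add_cancel]

/-- If `W ⊆ W'` are closed subspaces whose projections to `H⁺` are Fredholm and
`dim (W'/W) = l`, then `ν(W') = ν(W) + l`. -/
theorem vdim_of_le (Hp : Submodule ℂ H) [HasOrthogonalProjection Hp]
    (W W' : Submodule ℂ H) (hWc : IsClosed (W : Set H)) (hW'c : IsClosed (W' : Set H))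
    (hle : W ≤ W')
    (hFW : IsFredholm (projPlus Hp W)) (hFW' : IsFredholm (projPlus Hp W'))
    (l : ℕ) (hfin : FiniteDimensional ℂ (↥W' ⧸ W.comap W'.subtype))
    (hl : finrank ℂ (↥W' ⧸ W.comap W'.subtype) = l) :
    vdim Hp W' = vdim Hp W + l :=
  vdim_of_le_general Hp W W' hle hFW' l hfin hl
end
end

section
/- Let V ≅ Kⁿ and let F₁, F₂ be two complete flags in V. Then there exists a frame, i.e., a set of n one-dimensional subspaces U₁, …, Uₙ spanning V, such that every subspace of F₁ and every subspace of F₂ is a span of a subset of {U₁, …, Uₙ}. -/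
/-!
For each step `f₁ k < f₁ (k+1)` of the first flag, the condition `f₁ (k+1) ≤ f₁ k ⊔ f₂ j` fails
for `j = 0` and holds for `j = n`, so it switches on between some `σ k` and `σ k + 1`. By the
modular law some `v k ∈ f₁ (k+1) ⊓ f₂ (σ k + 1)` avoids `f₁ k ⊔ f₂ (σ k)`, and the line through
`v k` is then a step of both flags. If `k < k'` switched at the same `j`, then
`f₂ (j+1) = f₂ j ⊔ K ∙ v k` with `v k ∈ f₁ k'` would put `v k'` into `f₁ k' ⊔ f₂ j`.
So `σ` is a permutation, and each flag is built by adding the lines `K ∙ v k` one at a time.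
-/
open Module

theorem Fin.exists_not_castSucc_and_succ {n : ℕ} (P : Fin (n + 1) → Prop) (h0 : ¬P 0)
    (hlast : P (Fin.last n)) : ∃ j : Fin n, ¬P j.castSucc ∧ P j.succ := by
  by_contra! h
  exact Fin.induction (motive := fun i => ¬P i) h0 h (Fin.last n) hlast

theorem inf_not_le_sup_of_le_sup {α : Type*} [Lattice α] [IsModularLattice α] {a a' b b' : α}
    (ha : a ≤ a') (hb' : a' ≤ a ⊔ b') (hb : ¬a' ≤ a ⊔ b) : ¬a' ⊓ b' ≤ a ⊔ b := by
  intro h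
  apply hb
  calc a' = (a ⊔ b') ⊓ a' := (inf_eq_right.mpr hb').symm
    _ = a ⊔ b' ⊓ a' := sup_inf_assoc_of_le b' ha
    _ ≤ a ⊔ b := sup_le le_sup_left (inf_comm b' a' ▸ h)

theorem eq_finsetSup_of_succ_eq_sup {α : Type*} [SemilatticeSup α] [OrderBot α] {n : ℕ}
    {f : Fin (n + 1) → α} {u : Fin n → α} (σ : Fin n ≃ Fin n) (h0 : f 0 = ⊥)
    (hsucc : ∀ k, f (σ k).succ = f (σ k).castSucc ⊔ u k) (i : Fin (n + 1)) :
    f i = (Finset.univ.filter fun k => (σ k).castSucc < i).sup u := by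
  classical
  induction i using Fin.induction with
  | zero => simp [h0]
  | succ j ih =>
    have hins : (Finset.univ.filter fun k => (σ k).castSucc < j.succ) =
        insert (σ.symm j) (Finset.univ.filter fun k => (σ k).castSucc < j.castSucc) := by
      ext k
      simp only [Finset.mem_insert, Finset.mem_filter, Finset.mem_univ, true_and,
        Equiv.eq_symm_apply, Fin.castSucc_lt_succ_iff, Fin.castSucc_lt_castSucc_iff]
      exact le_iff_eq_or_lt
    rw [hins, Finset.sup_insert, ← ih, sup_comm]
    simpa using hsucc (σ.symm j)

namespace Submodule

variable {K V : Type*} [Field K] [AddCommGroup V] [Module K V]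

theorem covBy_of_lt_of_finrank_eq_succ [FiniteDimensional K V] {s t : Submodule K V}
    (hst : s < t) (h : finrank K t = finrank K s + 1) : s ⋖ t :=
  ⟨hst, fun c hsc hct => by
    have := finrank_lt_finrank_of_lt hsc
    have := finrank_lt_finrank_of_lt hct
    omega⟩

theorem eq_sup_span_singleton_of_covBy {s t : Submodule K V} (hst : s ⋖ t) {v : V}
    (hvt : v ∈ t) (hvs : v ∉ s) : t = s ⊔ K ∙ v := by
  have hle : s ⊔ K ∙ v ≤ t := sup_le hst.le ((span_singleton_le_iff_mem v t).mpr hvt)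
  refine ((hst.eq_or_eq le_sup_left hle).resolve_left fun h => hvs ?_).symm
  exact h ▸ mem_sup_right (mem_span_singleton_self v)

theorem exists_mem_inf_succ_notMem_sup_castSucc {n : ℕ} {a a' : Submodule K V} (ha : a < a')
    {b : Fin (n + 1) → Submodule K V} (hb0 : b 0 = ⊥) (hblast : b (Fin.last n) = ⊤) :
    ∃ j : Fin n, ∃ v ∈ a' ⊓ b j.succ, v ∉ a ⊔ b j.castSucc := by
  obtain ⟨j, hj, hj'⟩ := Fin.exists_not_castSucc_and_succ (fun j => a' ≤ a ⊔ b j)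
    (by simpa [hb0] using ha.not_ge) (by simp [hblast])
  exact ⟨j, SetLike.not_le_iff_exists.mp (inf_not_le_sup_of_le_sup ha.le hj' hj)⟩

theorem exists_equiv_succ_eq_sup_span_singleton {n : ℕ} {f₁ f₂ : Fin (n + 1) → Submodule K V}
    (hc₁ : ∀ k : Fin n, f₁ k.castSucc ⋖ f₁ k.succ) (hc₂ : ∀ k : Fin n, f₂ k.castSucc ⋖ f₂ k.succ)
    (h₂0 : f₂ 0 = ⊥) (h₂last : f₂ (Fin.last n) = ⊤) :
    ∃ (σ : Fin n ≃ Fin n) (v : Fin n → V), (∀ k, v k ≠ 0) ∧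
      (∀ k, f₁ k.succ = f₁ k.castSucc ⊔ K ∙ v k) ∧
      ∀ k, f₂ (σ k).succ = f₂ (σ k).castSucc ⊔ K ∙ v k := by
  choose σ v hv hout using fun k => exists_mem_inf_succ_notMem_sup_castSucc (hc₁ k).lt h₂0 h₂last
  have hout₁ : ∀ k, v k ∉ f₁ k.castSucc := fun k h => hout k (mem_sup_left h)
  have hout₂ : ∀ k, v k ∉ f₂ (σ k).castSucc := fun k h => hout k (mem_sup_right h)
  have hstep₂ : ∀ k, f₂ (σ k).succ = f₂ (σ k).castSucc ⊔ K ∙ v k := fun k =>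
    eq_sup_span_singleton_of_covBy (hc₂ _) (hv k).2 (hout₂ k)
  have hσ : Function.Injective σ := by
    refine Function.Injective.of_lt_imp_ne fun k k' hkk' hσk => hout k' ?_
    have hmono₁ : Monotone f₁ := Fin.monotone_iff_le_succ.2 fun i => (hc₁ i).le
    have hvk : K ∙ v k ≤ f₁ k'.castSucc := (span_singleton_le_iff_mem _ _).mpr
      (hmono₁ (Fin.succ_le_castSucc_iff.mpr hkk') (hv k).1)
    have hvk' : v k' ∈ f₂ (σ k).castSucc ⊔ K ∙ v k := hstep₂ k ▸ hσk ▸ (hv k').2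
    rw [← hσk, sup_comm]
    exact sup_le_sup_left hvk _ hvk'
  refine ⟨Equiv.ofBijective σ hσ.bijective_of_finite, v, fun k h => hout₁ k (h ▸ zero_mem _),
    fun k => eq_sup_span_singleton_of_covBy (hc₁ k) (hv k).1 (hout₁ k), hstep₂⟩

section CompleteFlag

variable [FiniteDimensional K V] {n : ℕ} {f : Fin (n + 1) → Submodule K V}

theorem eq_bot_of_finrank_eq_val (hdim : ∀ i, finrank K (f i) = i) : f 0 = ⊥ :=
  finrank_eq_zero.mp (by simpa using hdim 0)

theorem eq_top_of_finrank_eq_val (hdim : ∀ i, finrank K (f i) = i) (hn : finrank K V = n) :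
    f (Fin.last n) = ⊤ :=
  eq_top_of_finrank_eq (by rw [hdim, hn, Fin.val_last])

theorem castSucc_covBy_succ_of_finrank_eq_val (hf : StrictMono f)
    (hdim : ∀ i, finrank K (f i) = i) (k : Fin n) : f k.castSucc ⋖ f k.succ :=
  covBy_of_lt_of_finrank_eq_succ (hf k.castSucc_lt_succ) (by simp [hdim])

end CompleteFlag

end Submodule

open Submodule in
/-- Any two complete flags in an `n`-dimensional space admit a common frame:
`n` lines spanning `V` such that every member of either flag is the span of a
subset of the lines. -/
theorem complete_flags_common_frame {K V : Type*} [Field K] [AddCommGroup V]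
    [Module K V] [FiniteDimensional K V]
    (n : ℕ) (hn : finrank K V = n)
    (f₁ f₂ : Fin (n + 1) → Submodule K V)
    (hmono₁ : StrictMono f₁) (hmono₂ : StrictMono f₂)
    (hdim₁ : ∀ i, finrank K (f₁ i) = i) (hdim₂ : ∀ i, finrank K (f₂ i) = i) :
    ∃ U : Fin n → Submodule K V,
      (∀ j, finrank K (U j) = 1) ∧ (⨆ j, U j) = ⊤ ∧
      (∀ i, ∃ s : Finset (Fin n), f₁ i = s.sup U) ∧
      (∀ i, ∃ s : Finset (Fin n), f₂ i = s.sup U) := by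
  obtain ⟨σ, v, hv0, hstep₁, hstep₂⟩ := exists_equiv_succ_eq_sup_span_singleton
    (castSucc_covBy_succ_of_finrank_eq_val hmono₁ hdim₁)
    (castSucc_covBy_succ_of_finrank_eq_val hmono₂ hdim₂)
    (eq_bot_of_finrank_eq_val hdim₂) (eq_top_of_finrank_eq_val hdim₂ hn)
  have hrep₁ := eq_finsetSup_of_succ_eq_sup (Equiv.refl _) (eq_bot_of_finrank_eq_val hdim₁) hstep₁
  have hrep₂ := eq_finsetSup_of_succ_eq_sup σ (eq_bot_of_finrank_eq_val hdim₂) hstep₂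
  refine ⟨fun k => K ∙ v k, fun k => finrank_span_singleton (hv0 k), top_unique ?_,
    fun i => ⟨_, hrep₁ i⟩, fun i => ⟨_, hrep₂ i⟩⟩
  rw [← eq_top_of_finrank_eq_val hdim₁ hn, hrep₁]
  exact Finset.sup_le fun k _ => le_iSup (fun k => K ∙ v k) k
end
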